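/- Let v ∈ V, let i ∈ winʳ⁻_v, and let x = nextʳ_v(i). Then i ∈ winʳ⁻_x and nextʳ_x(i) = x, and for every function F : V → ℝ, costʳ_F(v,i) − costʳ_F(x,i) = costʳ_F(v,x) − costʳ_F(x,x). -/

import Mathlib

open Finset
open scoped Classical

noncomputable section

variable {V : Type} [Fintype V] [PartialOrder V]

/-- The chain `T[v,i]` : all vertices `p` with `v ≤ p ≤ i`. -/
def chainCC (v i : V) : Finset V := univ.filter (fun p => v ≤ p ∧ p ≤ i)

/-- The chain `T[v,i)` : `T[v,i]` without `i`. -/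
def chainCO (v i : V) : Finset V := (chainCC v i).erase i

/-- `p` is the parent of `j`. -/
def IsParent (p j : V) : Prop := p < j ∧ ¬ ∃ q, p < q ∧ q < j

/-- `u` is s-maximal in `T_v`. -/
def SMax (s : V → ℝ) (v u : V) : Prop := v ≤ u ∧ ∀ p ∈ chainCO v u, s p < s u

/-- The window of `v`. -/
def win (w : V → ℝ) (w0 : ℝ) (v : V) : Finset V :=
  univ.filter (fun i => v ≤ i ∧ ∑ j ∈ chainCC v i, w j ≤ w0)

/-- `win*_v`: the s-maximal vertices of the window of `v`. -/
def winStar (w : V → ℝ) (w0 : ℝ) (s : V → ℝ) (v : V) : Finset V :=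
  (win w w0 v).filter (fun i => SMax s v i)

/-- `win⁻_v = win_v \ win*_v`. -/
def winMinus (w : V → ℝ) (w0 : ℝ) (s : V → ℝ) (v : V) : Finset V :=
  win w w0 v \ winStar w w0 s v

/-- `next_v(u)`: the greatest (closest to `u`) s-maximal element of `T[v,u)`,
if such a greatest element exists (junk value `v` otherwise). -/
def nxt (s : V → ℝ) (v u : V) : V :=
  if h : ∃ x ∈ chainCO v u, SMax s v x ∧ ∀ y ∈ chainCO v u, SMax s v y → y ≤ x
  then h.choose else v

/-- The vertices `j` outside `T[v,i]` whose parent lies in `T[v,i]`. -/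
def branchOff (v i : V) : Finset V :=
  univ.filter (fun j => j ∉ chainCC v i ∧ ∃ p ∈ chainCC v i, IsParent p j)

/-- `sum_F(v,i) = Σ F(j)` over `j ∉ T[v,i]` whose parent lies in `T[v,i]`. -/
def sumF (F : V → ℝ) (v i : V) : ℝ := ∑ j ∈ branchOff v i, F j

/-- `cost_F(v,i)`: `sum_F(v,i) + s_i` if `i ∈ win*_v`, and
`sum_F(v,i) + s_{next_v(i)}` otherwise (in particular for `i ∈ win⁻_v`). -/
def costF (w : V → ℝ) (w0 : ℝ) (s : V → ℝ) (F : V → ℝ) (v i : V) : ℝ :=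
  if i ∈ winStar w w0 s v then sumF F v i + s i else sumF F v i + s (nxt s v i)

end

noncomputable section

variable {V : Type} [Fintype V] [PartialOrder V]

/-- `winʳ*_v`: the r-maximal vertices of the window of `v`
(r-maximality is `SMax` with respect to the rank function `r`). -/
def winStarR (w : V → ℝ) (w0 : ℝ) (r : V → ℝ) (v : V) : Finset V :=
  (win w w0 v).filter (fun i => SMax r v i)

/-- `winʳ⁻_v = win_v \ winʳ*_v`. -/
def winMinusR (w : V → ℝ) (w0 : ℝ) (r : V → ℝ) (v : V) : Finset V :=
  win w w0 v \ winStarR w w0 r v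

/-- `costʳ_F(v,i)`: `sum_F(v,i) + s_i` if `i ∈ winʳ*_v`, and
`sum_F(v,i) + s_{nextʳ_v(i)}` otherwise (in particular for `i ∈ winʳ⁻_v`);
here `nextʳ_v = nxt r v`. -/
def costR (w : V → ℝ) (w0 : ℝ) (s r : V → ℝ) (F : V → ℝ) (v i : V) : ℝ :=
  if i ∈ winStarR w w0 r v then sumF F v i + s i else sumF F v i + s (nxt r v i)

end

/-!
Write `x = nextʳ_v(i)`. Since `i` is not r-maximal in `T_v`, the last r-maximal vertex `x` of
`T[v,i)` carries the largest rank on `T[v,i)`, so `r i < r x`. Hence `i` is not r-maximal in `T_x`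
either, while no vertex of `T(x,i)` is (it would be r-maximal in `T_v` already). This gives the
first two claims, and shows that all four costs carry the same `s`-term `s_x`. What remains is an
identity between the `sum_F` terms valid whenever `v ≤ x ≤ i`: sorting the vertices by the position
of their parent (below, at, or above `x`) shows that every vertex is counted equally often on both
sides of `sum_F(v,i) + sum_F(x,x) = sum_F(v,x) + sum_F(x,i)`.
-/

section RootedTree

variable {V : Type} [PartialOrder V]

lemma IsParent.unique (htree : ∀ a b c : V, a ≤ c → b ≤ c → a ≤ b ∨ b ≤ a) {p q j : V}
    (hp : IsParent p j) (hq : IsParent q j) : q = p := by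
  rcases htree q p j hq.1.le hp.1.le with hqp | hpq
  · exact hqp.eq_or_lt.resolve_right fun h => hq.2 ⟨p, h, hp.1⟩
  · exact (hpq.eq_or_lt.resolve_right fun h => hp.2 ⟨q, h, hq.1⟩).symm

variable [Fintype V]

@[simp]
lemma mem_chainCC {v i p : V} : p ∈ chainCC v i ↔ v ≤ p ∧ p ≤ i := by
  simp [chainCC]

@[simp]
lemma mem_chainCO {v i p : V} : p ∈ chainCO v i ↔ v ≤ p ∧ p < i := by
  simp only [chainCO, mem_erase, mem_chainCC, lt_iff_le_and_ne]
  tauto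

lemma chainCC_subset_chainCC {v a b i : V} (hva : v ≤ a) (hbi : b ≤ i) :
    chainCC a b ⊆ chainCC v i := fun p hp => by
  rw [mem_chainCC] at hp ⊢
  exact ⟨hva.trans hp.1, hp.2.trans hbi⟩

lemma sMax_self (s : V → ℝ) (v : V) : SMax s v v :=
  ⟨le_rfl, fun _ hp => absurd ((mem_chainCO.mp hp).1.trans_lt (mem_chainCO.mp hp).2) (lt_irrefl v)⟩

lemma SMax.apply_le {s : V → ℝ} {v x p : V} (hx : SMax s v x) (hvp : v ≤ p) (hpx : p ≤ x) :
    s p ≤ s x := by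
  rcases hpx.lt_or_eq with hpx | rfl
  · exact (hx.2 p (mem_chainCO.mpr ⟨hvp, hpx⟩)).le
  · exact le_rfl

lemma SMax.trans (htree : ∀ a b c : V, a ≤ c → b ≤ c → a ≤ b ∨ b ≤ a) {s : V → ℝ} {v x z : V}
    (hvx : SMax s v x) (hxz : SMax s x z) : SMax s v z := by
  refine ⟨hvx.1.trans hxz.1, fun p hp => ?_⟩
  obtain ⟨hvp, hpz⟩ := mem_chainCO.mp hp
  rcases htree p x z hpz.le hxz.1 with hpx | hxp
  · rcases hpx.lt_or_eq with hpx | rfl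
    · exact (hvx.2 p (mem_chainCO.mpr ⟨hvp, hpx⟩)).trans_le (hxz.apply_le le_rfl hxz.1)
    · exact hxz.2 p (mem_chainCO.mpr ⟨le_rfl, hpz⟩)
  · exact hxz.2 p (mem_chainCO.mpr ⟨hxp, hpz⟩)

lemma sMax_of_forall_apply_le {s : V → ℝ} (hs : Function.Injective s) {v m : V} (hvm : v ≤ m)
    (hmax : ∀ p ∈ chainCC v m, s p ≤ s m) : SMax s v m :=
  ⟨hvm, fun p hp => by
    obtain ⟨hvp, hpm⟩ := mem_chainCO.mp hp
    exact (hmax p (mem_chainCC.mpr ⟨hvp, hpm.le⟩)).lt_of_ne fun h => hpm.ne (hs h)⟩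

lemma nxt_eq_of_greatest {s : V → ℝ} {v u y : V} (hy : y ∈ chainCO v u) (hys : SMax s v y)
    (hgreatest : ∀ z ∈ chainCO v u, SMax s v z → z ≤ y) : nxt s v u = y := by
  have h : ∃ x ∈ chainCO v u, SMax s v x ∧ ∀ z ∈ chainCO v u, SMax s v z → z ≤ x :=
    ⟨y, hy, hys, hgreatest⟩
  obtain ⟨hx, hxs, hxgreatest⟩ := h.choose_spec
  rw [nxt, dif_pos h]
  exact le_antisymm (hgreatest _ hx hxs) (hxgreatest y hy hys)

lemma nxt_spec (htree : ∀ a b c : V, a ≤ c → b ≤ c → a ≤ b ∨ b ≤ a) (s : V → ℝ) {v u : V}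
    (hvu : v < u) :
    nxt s v u ∈ chainCO v u ∧ SMax s v (nxt s v u) ∧
      ∀ z ∈ chainCO v u, SMax s v z → z ≤ nxt s v u := by
  set S := (chainCO v u).filter (SMax s v)
  have hv : v ∈ S := mem_filter.mpr ⟨mem_chainCO.mpr ⟨le_rfl, hvu⟩, sMax_self s v⟩
  obtain ⟨y, hyS, hymax⟩ := S.exists_maximal ⟨v, hv⟩
  obtain ⟨hy, hys⟩ := mem_filter.mp hyS
  -- `S` lies in the chain below `u`, so its maximal element is its greatest one
  have hgreatest : ∀ z ∈ chainCO v u, SMax s v z → z ≤ y := fun z hz hzs => by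
    rcases htree z y u (mem_chainCO.mp hz).2.le (mem_chainCO.mp hy).2.le with hzy | hyz
    · exact hzy
    · exact hymax (mem_filter.mpr ⟨hz, hzs⟩) hyz
  rw [nxt_eq_of_greatest hy hys hgreatest]
  exact ⟨hy, hys, hgreatest⟩

lemma nxt_nxt_eq (htree : ∀ a b c : V, a ≤ c → b ≤ c → a ≤ b ∨ b ≤ a) (s : V → ℝ) {v u : V}
    (hvu : v < u) : nxt s (nxt s v u) u = nxt s v u := by
  obtain ⟨hx, hxs, hxgreatest⟩ := nxt_spec htree s hvu
  refine nxt_eq_of_greatest (mem_chainCO.mpr ⟨le_rfl, (mem_chainCO.mp hx).2⟩)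
    (sMax_self s _) fun z hz hzs => hxgreatest z ?_ (hxs.trans htree hzs)
  exact mem_chainCO.mpr ⟨(mem_chainCO.mp hx).1.trans (mem_chainCO.mp hz).1, (mem_chainCO.mp hz).2⟩

lemma apply_le_nxt (htree : ∀ a b c : V, a ≤ c → b ≤ c → a ≤ b ∨ b ≤ a) {s : V → ℝ}
    (hs : Function.Injective s) {v u : V} (hvu : v < u) :
    ∀ p ∈ chainCO v u, s p ≤ s (nxt s v u) := by
  obtain ⟨hx, hxs, hxgreatest⟩ := nxt_spec htree s hvu
  obtain ⟨m, hm, hmmax⟩ := (chainCO v u).exists_max_image s ⟨v, mem_chainCO.mpr ⟨le_rfl, hvu⟩⟩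
  obtain ⟨hvm, hmu⟩ := mem_chainCO.mp hm
  have hms : SMax s v m := sMax_of_forall_apply_le hs hvm fun p hp =>
    hmmax p (mem_chainCO.mpr ⟨(mem_chainCC.mp hp).1, (mem_chainCC.mp hp).2.trans_lt hmu⟩)
  exact fun p hp => (hmmax p hp).trans (hxs.apply_le hvm (hxgreatest m hm hms))

lemma lt_of_not_sMax {s : V → ℝ} {v u : V} (hvu : v ≤ u) (hu : ¬ SMax s v u) : v < u :=
  hvu.lt_of_ne fun h => hu (h ▸ sMax_self s v)

lemma apply_lt_nxt (htree : ∀ a b c : V, a ≤ c → b ≤ c → a ≤ b ∨ b ≤ a) {s : V → ℝ}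
    (hs : Function.Injective s) {v u : V} (hvu : v < u) (hu : ¬ SMax s v u) :
    s u < s (nxt s v u) := by
  obtain ⟨p, hp, hup⟩ : ∃ p ∈ chainCO v u, s u ≤ s p := by
    simpa [SMax, hvu.le, and_assoc] using hu
  refine (hup.trans (apply_le_nxt htree hs hvu p hp)).lt_of_ne fun h => ?_
  exact (mem_chainCO.mp (nxt_spec htree s hvu).1).2.ne (hs h).symm

lemma mem_win_of_le {w : V → ℝ} (hw : ∀ j, 0 ≤ w j) {w0 : ℝ} {v a b i : V}
    (hi : i ∈ win w w0 v) (hva : v ≤ a) (hab : a ≤ b) (hbi : b ≤ i) : b ∈ win w w0 a := by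
  simp only [win, mem_filter, mem_univ, true_and] at hi ⊢
  exact ⟨hab, (sum_le_sum_of_subset_of_nonneg (chainCC_subset_chainCC hva hbi)
    fun j _ _ => hw j).trans hi.2⟩

@[simp]
lemma mem_winStarR {w : V → ℝ} {w0 : ℝ} {r : V → ℝ} {v i : V} :
    i ∈ winStarR w w0 r v ↔ i ∈ win w w0 v ∧ SMax r v i :=
  mem_filter

@[simp]
lemma mem_winMinusR {w : V → ℝ} {w0 : ℝ} {r : V → ℝ} {v i : V} :
    i ∈ winMinusR w w0 r v ↔ i ∈ win w w0 v ∧ ¬ SMax r v i := by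
  simp +contextual [winMinusR]

lemma mem_branchOff_iff (htree : ∀ a b c : V, a ≤ c → b ≤ c → a ≤ b ∨ b ≤ a) {a b p j : V}
    (hp : IsParent p j) : j ∈ branchOff a b ↔ (a ≤ p ∧ p ≤ b) ∧ ¬ j ≤ b := by
  simp only [branchOff, mem_filter, mem_univ, true_and, mem_chainCC]
  constructor
  · rintro ⟨hj, q, hq, hqj⟩
    obtain rfl := hqj.unique htree hp
    exact ⟨hq, fun hjb => hj ⟨hq.1.trans hp.1.le, hjb⟩⟩
  · rintro ⟨hpab, hjb⟩
    exact ⟨fun hj => hjb hj.2, p, hpab, hp⟩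

lemma not_mem_branchOff {a b j : V} (hj : ¬ ∃ p, IsParent p j) : j ∉ branchOff a b := by
  simp only [branchOff, mem_filter, mem_univ, true_and, not_and]
  exact fun _ ⟨p, _, hp⟩ => hj ⟨p, hp⟩

lemma sumF_add_sumF (htree : ∀ a b c : V, a ≤ c → b ≤ c → a ≤ b ∨ b ≤ a) (F : V → ℝ)
    {v x i : V} (hvx : v ≤ x) (hxi : x ≤ i) :
    sumF F v i + sumF F x x = sumF F v x + sumF F x i := by
  have hsum : ∀ a b, sumF F a b = ∑ j, if j ∈ branchOff a b then F j else 0 := fun a b => by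
    rw [sum_ite_mem, univ_inter, sumF]
  simp only [hsum, ← sum_add_distrib]
  refine sum_congr rfl fun j _ => ?_
  by_cases hj : ∃ p, IsParent p j
  swap
  · simp only [not_mem_branchOff hj, if_false]
  obtain ⟨p, hp⟩ := hj
  simp only [mem_branchOff_iff htree hp]
  by_cases hpvi : v ≤ p ∧ p ≤ i
  swap
  · have hxx : ¬ (x ≤ p ∧ p ≤ x) := fun h => hpvi ⟨hvx.trans h.1, h.2.trans hxi⟩
    have hvx' : ¬ (v ≤ p ∧ p ≤ x) := fun h => hpvi ⟨h.1, h.2.trans hxi⟩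
    have hxi' : ¬ (x ≤ p ∧ p ≤ i) := fun h => hpvi ⟨hvx.trans h.1, h.2⟩
    simp only [hpvi, hxx, hvx', hxi', false_and, if_false]
  have hcases : p < x ∨ p = x ∨ x < p := by
    rcases htree p x i hpvi.2 hxi with h | h
    · exact h.lt_or_eq.imp_right Or.inl
    · exact Or.inr (h.eq_or_lt.imp Eq.symm id)
  rcases hcases with hpx | rfl | hxp
  · -- a child of `p` lying below `i` lies below `x`
    have hji : j ≤ i ↔ j ≤ x := by
      refine ⟨fun hji => ?_, fun hjx => hjx.trans hxi⟩
      rcases htree j x i hji hxi with hjx | hxj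
      · exact hjx
      · exact hxj.eq_or_lt.elim ge_of_eq fun hxj => absurd ⟨x, hpx, hxj⟩ hp.2
    simp [hji, hpvi.1, hpvi.2, hpx.le, hpx.not_ge]
  · simp [hpvi.1, hpvi.2, add_comm]
  · simp [hpvi, hxp.le, hxp.not_ge]

end RootedTree

theorem stmt_17_general (V : Type) [Fintype V] [PartialOrder V]
    (htree : ∀ a b c : V, a ≤ c → b ≤ c → a ≤ b ∨ b ≤ a)
    (w : V → ℝ) (s : V → ℝ) (w0 : ℝ)
    (hw : ∀ i : V, 0 ≤ w i)
    (r : V → ℝ) (hr : Function.Injective r)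
    (v i : V) (hi : i ∈ winMinusR w w0 r v)
    (x : V) (hx : x = nxt r v i) :
    i ∈ winMinusR w w0 r x ∧ nxt r x i = x ∧
    ∀ F : V → ℝ,
      costR w w0 s r F v i - costR w w0 s r F x i
        = costR w w0 s r F v x - costR w w0 s r F x x := by
  obtain ⟨hiv, hi_not⟩ := mem_winMinusR.mp hi
  have hvi : v < i := lt_of_not_sMax (mem_filter.mp hiv).2.1 hi_not
  have hrank : r i < r x := hx ▸ apply_lt_nxt htree hr hvi hi_not
  obtain ⟨hx_mem, hx_max, -⟩ := hx ▸ nxt_spec htree r hvi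
  obtain ⟨hvx, hxi⟩ := mem_chainCO.mp hx_mem
  have hnext : nxt r x i = x := hx ▸ nxt_nxt_eq htree r hvi
  have hi_not_x : ¬ SMax r x i := fun h =>
    (h.2 x (mem_chainCO.mpr ⟨le_rfl, hxi⟩)).not_gt hrank
  have hx_star_v : x ∈ winStarR w w0 r v :=
    mem_winStarR.mpr ⟨mem_win_of_le hw hiv le_rfl hvx hxi.le, hx_max⟩
  have hx_star_x : x ∈ winStarR w w0 r x :=
    mem_winStarR.mpr ⟨mem_win_of_le hw hiv hvx le_rfl hxi.le, sMax_self r x⟩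
  refine ⟨mem_winMinusR.mpr ⟨mem_win_of_le hw hiv hvx hxi.le le_rfl, hi_not_x⟩, hnext, fun F => ?_⟩
  have hsumF := sumF_add_sumF htree F hvx hxi.le
  simp only [costR]
  rw [if_neg (mt (fun h => (mem_winStarR.mp h).2) hi_not),
    if_neg (mt (fun h => (mem_winStarR.mp h).2) hi_not_x), if_pos hx_star_v, if_pos hx_star_x,
    hnext, ← hx]
  linarith

theorem stmt_17 (V : Type) [Fintype V] [Nonempty V] [PartialOrder V]
    (htree : ∀ a b c : V, a ≤ c → b ≤ c → a ≤ b ∨ b ≤ a)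
    (w : V → ℝ) (s : V → ℝ) (w0 : ℝ)
    (hw : ∀ i : V, 0 ≤ w i) (hw0 : 0 ≤ w0)
    (r : V → ℝ) (hr : Function.Injective r)
    (v i : V) (hi : i ∈ winMinusR w w0 r v)
    (x : V) (hx : x = nxt r v i) :
    i ∈ winMinusR w w0 r x ∧ nxt r x i = x ∧
    ∀ F : V → ℝ,
      costR w w0 s r F v i - costR w w0 s r F x i
        = costR w w0 s r F v x - costR w w0 s r F x x :=
  stmt_17_general V htree w s w0 hw r hr v i hi x hx
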